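/- Let q_1,…,q_s ∈ ℂ[x,y] be nonzero homogeneous binary forms, q_i = Σ_{j=0}^{n_i} A_j^{(i)} x^{n_i−j} y^j of degree n_i ≥ 1, let n_* = min_i n_i, n^* = max_i n_i, and let m be an integer with 1 ≤ m ≤ n_*. Then the forms q_1,…,q_s have a common divisor in ℂ[x,y] that is homogeneous of degree ≥ m if and only if the resultant matrix R_{n^* + n_* − m} has rank strictly less than n_* + n^* − 2m + 2. -/

import Mathlib

/-!
The rows of `R_l` are the coefficient vectors of the forms `x^α y^β q_i` of degree `l`, so
`rank R_l` is the dimension of the degree-`l` part `I_l` of the ideal `I = (q_1, …, q_s)`.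

A common divisor `D` of degree `e` puts `I_l` inside `D · (forms of degree l - e)`, of dimension
`l - e + 1`. Conversely, write `q_i = G p_i` with `G` a homogeneous common divisor of maximal
degree `d < m`; multiplication by `G` maps `J_{l-d}` isomorphically onto `I_l`, where
`J = (p_1, …, p_s)`, and no linear form divides all the `p_i`. If an ideal `J` contains a nonzero
form of degree `a` and, for every linear form `ℓ`, a form of degree `≤ b` not divisible by `ℓ`,
then `J_L` has codimension at most `a + b - 1 - L` among the forms of degree `L`; with
`a = n_* - d`, `b = n^* - d` and `L = l - d` this gives `rank R_l ≥ n_* + n^* - 2m + 2`. The bound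
is proved by induction on `a`: over `ℂ` the form `f` of degree `a` factors as `ℓ g`,
multiplication by `ℓ` maps `(J + (g))_{L-1}` into `J_L`, and its image misses `x^k p` or `y^k p`
for a `p ∈ J` not divisible by `ℓ`.
-/

/-- The coefficient of `x^a y^b` in a binary form `q ∈ ℂ[x,y]`. -/
noncomputable def coeffOf (q : MvPolynomial (Fin 2) ℂ) (a b : ℕ) : ℂ :=
  MvPolynomial.coeff (Finsupp.single 0 a + Finsupp.single 1 b) q

/-- The resultant matrix `R_l` of the binary forms `q i` of (formal) degrees `n i`:
for each `i` there is a block of rows indexed by `t = 0, …, l - n i`, with columns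
indexed by `c = 0, …, l`; the `(t,c)`-entry is `A^{(i)}_{c-t}`, the coefficient of
`x^{n i - (c-t)} y^{c-t}` in `q i` (interpreted as `0` when `c-t ∉ {0,…,n i}`). -/
noncomputable def resMat {ι : Type} [Fintype ι] (n : ι → ℕ) (q : ι → MvPolynomial (Fin 2) ℂ)
    (l : ℕ) : Matrix ((i : ι) × Fin (l + 1 - n i)) (Fin (l + 1)) ℂ :=
  fun r c =>
    if r.2.val ≤ c.val ∧ c.val - r.2.val ≤ n r.1
      then coeffOf (q r.1) (n r.1 - (c.val - r.2.val)) (c.val - r.2.val) else 0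

namespace MvPolynomial

section Homogeneous

variable {σ R : Type*} [CommRing R]

attribute [local instance] MvPolynomial.gradedAlgebra in
theorem homogeneousComponent_mul_of_isHomogeneous_left {g : MvPolynomial σ R} {i : ℕ}
    (hg : g.IsHomogeneous i) (h : MvPolynomial σ R) (n : ℕ) :
    homogeneousComponent (i + n) (g * h) = g * homogeneousComponent n h := by
  have := DirectSum.coe_decompose_mul_of_left_mem_of_le (homogeneousSubmodule σ R) (b := h)
    (n := i + n) hg (Nat.le_add_right i n)
  rw [Nat.add_sub_cancel_left] at this
  rwa [← decomposition.decompose'_apply, ← decomposition.decompose'_apply]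

theorem IsHomogeneous.of_mul_left [IsDomain R] {g h : MvPolynomial σ R} {i N : ℕ}
    (hgh : (g * h).IsHomogeneous N) (hg : g.IsHomogeneous i) (h0 : g * h ≠ 0) :
    i ≤ N ∧ h.IsHomogeneous (N - i) := by
  have hg0 : g ≠ 0 := left_ne_zero_of_mul h0
  have hiN : i ≤ N := by
    have := totalDegree_mul_of_isDomain hg0 (right_ne_zero_of_mul h0)
    rw [hgh.totalDegree h0, hg.totalDegree hg0] at this
    omega
  refine ⟨hiN, fun d hd => ?_⟩
  by_contra hne
  have hcomp := homogeneousComponent_mul_of_isHomogeneous_left hg h (Finsupp.weight 1 d)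
  rw [homogeneousComponent_of_mem ((mem_homogeneousSubmodule _ _).2 hgh), if_neg (by omega),
    eq_comm, mul_eq_zero, or_iff_right hg0] at hcomp
  exact hd (by simpa [coeff_homogeneousComponent, Finsupp.degree_eq_weight_one, Pi.one_def]
    using congr(coeff d $hcomp))

end Homogeneous

theorem exists_common_divisor_of_maximal_degree {ι σ R : Type*} [CommSemiring R]
    (q : ι → MvPolynomial σ R) {m : ℕ}
    (hno : ¬∃ (D : MvPolynomial σ R) (e : ℕ), m ≤ e ∧ D.IsHomogeneous e ∧ ∀ i, D ∣ q i) :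
    ∃ (G : MvPolynomial σ R) (d : ℕ), d < m ∧ G.IsHomogeneous d ∧ (∀ i, G ∣ q i) ∧
      ∀ ℓ : MvPolynomial σ R, ℓ.IsHomogeneous 1 → ¬∀ i, G * ℓ ∣ q i := by
  classical
  set P : ℕ → Prop := fun e => ∃ G : MvPolynomial σ R, G.IsHomogeneous e ∧ ∀ i, G ∣ q i
  have hP : ∀ e, P e → e < m := fun e ⟨G, hG, hGq⟩ => by
    by_contra! hme
    exact hno ⟨G, e, hme, hG, hGq⟩
  have h0 : P 0 := ⟨1, isHomogeneous_one _ _, fun _ => one_dvd _⟩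
  obtain ⟨G, hG, hGq⟩ := Nat.findGreatest_spec (P := P) (Nat.zero_le m) h0
  refine ⟨G, _, hP _ ⟨G, hG, hGq⟩, hG, hGq, fun ℓ hℓ hGℓ => ?_⟩
  have hGℓ' : P (Nat.findGreatest P m + 1) := ⟨G * ℓ, hG.mul hℓ, hGℓ⟩
  exact Nat.findGreatest_is_greatest (Nat.lt_succ_self _) (hP _ hGℓ').le hGℓ'

section DegreePart

variable {σ K : Type*} [Field K]

theorem prime_of_isHomogeneous_one {ℓ : MvPolynomial σ K} (hℓ : ℓ.IsHomogeneous 1)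
    (hℓ0 : ℓ ≠ 0) : Prime ℓ := by
  refine (irreducible_of_totalDegree_eq_one (hℓ.totalDegree hℓ0) fun x hx => ?_).prime
  obtain ⟨d, hd⟩ := ne_zero_iff.1 hℓ0
  exact isUnit_iff_ne_zero.2 fun hx0 => hd (zero_dvd_iff.1 (hx0 ▸ hx d))

noncomputable def degreePart (I : Ideal (MvPolynomial σ K)) (L : ℕ) :
    Submodule K (MvPolynomial σ K) :=
  I.restrictScalars K ⊓ homogeneousSubmodule σ K L

theorem mem_degreePart {I : Ideal (MvPolynomial σ K)} {L : ℕ} {x : MvPolynomial σ K} :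
    x ∈ degreePart I L ↔ x ∈ I ∧ x.IsHomogeneous L :=
  Iff.rfl

theorem degreePart_mono {I J : Ideal (MvPolynomial σ K)} (hIJ : I ≤ J) (L : ℕ) :
    degreePart I L ≤ degreePart J L :=
  inf_le_inf_right _ fun _ hx => hIJ hx

theorem degreePart_top (L : ℕ) :
    degreePart (⊤ : Ideal (MvPolynomial σ K)) L = homogeneousSubmodule σ K L := by
  simp [degreePart]

instance [Finite σ] (I : Ideal (MvPolynomial σ K)) (L : ℕ) :
    FiniteDimensional K (degreePart I L) :=
  have : FiniteDimensional K (homogeneousSubmodule σ K L) :=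
    Module.Finite.iff_fg.2 (homogeneousSubmodule_fg σ K L)
  Submodule.finiteDimensional_of_le inf_le_right

theorem degreePart_span_singleton_mul {G : MvPolynomial σ K} {d l : ℕ} (hG : G.IsHomogeneous d)
    (hG0 : G ≠ 0) (hdl : d ≤ l) (J : Ideal (MvPolynomial σ K)) :
    degreePart (Ideal.span {G} * J) l = (degreePart J (l - d)).map (LinearMap.mulLeft K G) := by
  ext x
  simp only [Submodule.mem_map, mem_degreePart, Ideal.mem_span_singleton_mul,
    LinearMap.mulLeft_apply]
  constructor
  · rintro ⟨⟨y, hyJ, rfl⟩, hx⟩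
    rcases eq_or_ne y 0 with rfl | hy0
    · exact ⟨0, ⟨J.zero_mem, isHomogeneous_zero _ _ _⟩, rfl⟩
    exact ⟨y, ⟨hyJ, (hx.of_mul_left hG (mul_ne_zero hG0 hy0)).2⟩, rfl⟩
  · rintro ⟨y, ⟨hyJ, hy⟩, rfl⟩
    exact ⟨⟨y, hyJ, rfl⟩, by simpa [hdl] using hG.mul hy⟩

theorem finrank_degreePart_span_singleton_mul {G : MvPolynomial σ K} {d l : ℕ}
    (hG : G.IsHomogeneous d) (hG0 : G ≠ 0) (hdl : d ≤ l) (J : Ideal (MvPolynomial σ K)) :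
    Module.finrank K (degreePart (Ideal.span {G} * J) l) =
      Module.finrank K (degreePart J (l - d)) := by
  rw [degreePart_span_singleton_mul hG hG0 hdl]
  exact (Submodule.equivMapOfInjective _ (mul_right_injective₀ hG0) _).finrank_eq.symm

end DegreePart

section BinaryForm

variable {K : Type*} [Field K]

theorem single_add_single_le_iff {a b a' b' : ℕ} :
    Finsupp.single (0 : Fin 2) a + Finsupp.single 1 b ≤
        Finsupp.single 0 a' + Finsupp.single 1 b' ↔ a ≤ a' ∧ b ≤ b' := by
  simp [Finsupp.le_def, Fin.forall_fin_two]

theorem single_add_single_tsub {a b a' b' : ℕ} :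
    Finsupp.single (0 : Fin 2) a' + Finsupp.single 1 b' -
        (Finsupp.single 0 a + Finsupp.single 1 b) =
      Finsupp.single 0 (a' - a) + Finsupp.single 1 (b' - b) := by
  ext i; fin_cases i <;> simp

noncomputable def binaryMonomial (l : ℕ) (c : Fin (l + 1)) : MvPolynomial (Fin 2) K :=
  monomial (Finsupp.single 0 (l - c) + Finsupp.single 1 (c : ℕ)) 1

theorem linearIndependent_binaryMonomial (l : ℕ) :
    LinearIndependent K (binaryMonomial (K := K) l) := by
  have hinj : Function.Injective fun c : Fin (l + 1) =>
      Finsupp.single (0 : Fin 2) (l - c) + Finsupp.single 1 (c : ℕ) := fun c c' h => by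
    simpa [Fin.ext_iff] using congr($h 1)
  exact (basisMonomials (Fin 2) K).linearIndependent.comp _ hinj

theorem IsHomogeneous.sum_coeff_smul_binaryMonomial {x : MvPolynomial (Fin 2) K} {l : ℕ}
    (hx : x.IsHomogeneous l) :
    ∑ c : Fin (l + 1), coeff (Finsupp.single 0 (l - c) + Finsupp.single 1 (c : ℕ)) x •
      binaryMonomial l c = x := by
  ext u
  simp only [coeff_sum, coeff_smul, binaryMonomial, coeff_monomial, smul_eq_mul, mul_ite, mul_one,
    mul_zero]
  by_cases hu : u 0 + u 1 = l
  · have hu' : Finsupp.single 0 (l - u 1) + Finsupp.single 1 (u 1) = u := by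
      rw [show l - u 1 = u 0 by omega]
      ext i; fin_cases i <;> simp
    rw [Finset.sum_eq_single ⟨u 1, by omega⟩]
    · simp only [hu', if_true]
    · rintro c - hc
      rw [if_neg]
      rintro rfl
      simp at hc
    · simp
  · rw [hx.coeff_eq_zero, Finset.sum_eq_zero]
    · intro c _
      rw [if_neg]
      rintro rfl
      exact hu (by simp [Nat.sub_add_cancel (Nat.le_of_lt_succ c.isLt)])
    · simpa [Finsupp.degree_eq_sum] using hu

theorem finrank_homogeneousSubmodule_fin_two (k : ℕ) :
    Module.finrank K (homogeneousSubmodule (Fin 2) K k) = k + 1 := by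
  classical
  set S := (Finset.univ : Finset (Fin 2)).finsuppAntidiag k
  have hS : {d : Fin 2 →₀ ℕ | d.degree = k} = S := by
    ext d; simp [S, Finsupp.degree_eq_sum]
  rw [homogeneousSubmodule_eq_finsupp_supported, hS, AddMonoidAlgebra.supported_eq_map,
    LinearEquiv.finrank_map_eq, (Finsupp.supportedEquivFinsupp _).finrank_eq,
    Module.finrank_finsupp_self]
  simp [S, Finset.card_finsuppAntidiag_nat_eq_choose, add_comm 1 k]

theorem finrank_degreePart_span_singleton {G : MvPolynomial (Fin 2) K} {d l : ℕ}
    (hG : G.IsHomogeneous d) (hG0 : G ≠ 0) (hdl : d ≤ l) :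
    Module.finrank K (degreePart (Ideal.span {G}) l) = l - d + 1 := by
  rw [← Ideal.mul_top (Ideal.span {G}), finrank_degreePart_span_singleton_mul hG hG0 hdl,
    degreePart_top, finrank_homogeneousSubmodule_fin_two]

theorem le_finrank_degreePart_of_mem {I : Ideal (MvPolynomial (Fin 2) K)}
    {f : MvPolynomial (Fin 2) K} {a : ℕ} (hfI : f ∈ I) (hf0 : f ≠ 0) (hf : f.IsHomogeneous a)
    (L : ℕ) : L + 1 - a ≤ Module.finrank K (degreePart I L) := by
  rcases le_or_gt a L with haL | haL
  · rw [show L + 1 - a = L - a + 1 by omega, ← finrank_degreePart_span_singleton hf hf0 haL]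
    exact Submodule.finrank_mono (degreePart_mono ((Ideal.span_singleton_le_iff_mem I).2 hfI) L)
  · omega

theorem natDegree_aeval_X_one_le (f : MvPolynomial (Fin 2) K) :
    (aeval (![Polynomial.X, 1] : Fin 2 → Polynomial K) f).natDegree ≤ f.totalDegree := by
  conv_lhs => rw [f.as_sum, map_sum]
  refine Polynomial.natDegree_sum_le_of_forall_le _ _ fun u hu => ?_
  rw [aeval_monomial, Finsupp.prod_fintype _ _ (fun _ => pow_zero _), Fin.prod_univ_two]
  simp only [Matrix.cons_val_zero, Matrix.cons_val_one, one_pow, mul_one]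
  refine (Polynomial.natDegree_C_mul_le _ _).trans ((Polynomial.natDegree_X_pow_le _).trans ?_)
  refine le_trans ?_ (le_totalDegree hu)
  rw [Finsupp.sum_fintype _ _ fun _ => rfl, Fin.sum_univ_two]
  omega

theorem IsHomogeneous.exists_linear_factor [IsAlgClosed K] {f : MvPolynomial (Fin 2) K} {a : ℕ}
    (hf : f.IsHomogeneous (a + 1)) :
    ∃ ℓ g : MvPolynomial (Fin 2) K, ℓ.IsHomogeneous 1 ∧ g.IsHomogeneous a ∧ f = ℓ * g := by
  -- `f` is the homogenization of `p = f(x, 1)`; a root `r` of `p` gives the factor `x - r y`,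
  -- a drop in degree the factor `y`.
  set p := MvPolynomial.aeval (![Polynomial.X, 1] : Fin 2 → Polynomial K) f
  have hp : p.natDegree ≤ a + 1 := (natDegree_aeval_X_one_le f).trans hf.totalDegree_le
  obtain ⟨ρ, u, hρ, hu, hpu⟩ :
      ∃ ρ u : Polynomial K, ρ.natDegree ≤ 1 ∧ u.natDegree ≤ a ∧ p = ρ * u := by
    rcases hp.lt_or_eq with hlt | heq
    · exact ⟨1, p, by simp, by omega, (one_mul p).symm⟩
    obtain ⟨r, hr⟩ :=
      IsAlgClosed.exists_root p (Polynomial.natDegree_pos_iff_degree_pos.1 (by omega)).ne'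
    refine ⟨Polynomial.X - Polynomial.C r, p /ₘ (Polynomial.X - Polynomial.C r),
      Polynomial.natDegree_X_sub_C_le _, ?_, (Polynomial.mul_divByMonic_eq_iff_isRoot.2 hr).symm⟩
    rw [Polynomial.natDegree_divByMonic _ (Polynomial.monic_X_sub_C r), heq,
      Polynomial.natDegree_X_sub_C]
    omega
  refine ⟨ρ.homogenize 1, u.homogenize a, Polynomial.isHomogeneous_homogenize _,
    Polynomial.isHomogeneous_homogenize _, ?_⟩
  rw [← Polynomial.homogenize_mul _ _ hρ hu, ← hpu, add_comm 1 a,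
    Polynomial.homogenize_eq_of_isHomogeneous hf rfl]

theorem exists_forall_not_dvd_X_pow_mul {ℓ p : MvPolynomial (Fin 2) K} (hℓ : Prime ℓ)
    (hp : ¬ℓ ∣ p) : ∃ j, ∀ k, ¬ℓ ∣ X j ^ k * p := by
  obtain ⟨j, hj⟩ : ∃ j : Fin 2, ¬ℓ ∣ X j := by
    by_contra! h
    simpa using (hℓ.irreducible.dvd_symm X_prime.irreducible (h 0)).trans (h 1)
  exact ⟨j, fun k hk => (hℓ.dvd_or_dvd hk).elim (fun h => hj (hℓ.dvd_of_dvd_pow h)) hp⟩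

theorem finrank_degreePart_sup_span_singleton_lt {I : Ideal (MvPolynomial (Fin 2) K)}
    {ℓ g p : MvPolynomial (Fin 2) K} {d L : ℕ} (hℓ : ℓ.IsHomogeneous 1) (hℓ0 : ℓ ≠ 0)
    (hℓg : ℓ * g ∈ I) (hpI : p ∈ I) (hp : p.IsHomogeneous d) (hdL : d ≤ L + 1) (hℓp : ¬ℓ ∣ p) :
    Module.finrank K (degreePart (I ⊔ Ideal.span {g}) L) <
      Module.finrank K (degreePart I (L + 1)) := by
  set U := (degreePart (I ⊔ Ideal.span {g}) L).map (LinearMap.mulLeft K ℓ)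
  have hU : U ≤ degreePart I (L + 1) := by
    rintro _ ⟨x, ⟨hx, hxL⟩, rfl⟩
    obtain ⟨y, hy, z, hz, rfl⟩ := Submodule.mem_sup.1 hx
    obtain ⟨c, rfl⟩ := Ideal.mem_span_singleton'.1 hz
    refine ⟨?_, by simpa [add_comm] using hℓ.mul hxL⟩
    rw [LinearMap.mulLeft_apply, mul_add, mul_left_comm]
    exact I.add_mem (I.mul_mem_left _ hy) (I.mul_mem_left _ hℓg)
  obtain ⟨j, hj⟩ := exists_forall_not_dvd_X_pow_mul (prime_of_isHomogeneous_one hℓ hℓ0) hℓp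
  have hv : X j ^ (L + 1 - d) * p ∈ degreePart I (L + 1) :=
    ⟨I.mul_mem_left _ hpI, by simpa [hdL] using (isHomogeneous_X_pow j (L + 1 - d)).mul hp⟩
  have hvU : X j ^ (L + 1 - d) * p ∉ U := fun ⟨x, _, hx⟩ => hj _ ⟨x, hx.symm⟩
  calc Module.finrank K (degreePart (I ⊔ Ideal.span {g}) L) = Module.finrank K U :=
        (Submodule.equivMapOfInjective _ (mul_right_injective₀ hℓ0) _).finrank_eq
    _ < _ := Submodule.finrank_lt_finrank_of_lt (lt_of_le_of_ne hU fun h => hvU (h ▸ hv))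

/-- As `L + 1` is the dimension of the forms of degree `L`, this bounds the codimension of
`degreePart I L` among them by `a + b - 1 - L`. -/
theorem succ_le_finrank_degreePart_add [IsAlgClosed K] {I : Ideal (MvPolynomial (Fin 2) K)}
    {f : MvPolynomial (Fin 2) K} {a b : ℕ} (hfI : f ∈ I) (hf0 : f ≠ 0) (hf : f.IsHomogeneous a)
    (hcop : ∀ ℓ : MvPolynomial (Fin 2) K, ℓ.IsHomogeneous 1 → ℓ ≠ 0 →
      ∃ p ∈ I, ∃ d ≤ b, p.IsHomogeneous d ∧ ¬ℓ ∣ p) (L : ℕ) :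
    L + 1 ≤ Module.finrank K (degreePart I L) + (a + b - 1 - L) := by
  induction a generalizing I f L with
  | zero => have := le_finrank_degreePart_of_mem hfI hf0 hf L; omega
  | succ a ih =>
    have hfL := le_finrank_degreePart_of_mem hfI hf0 hf L
    obtain ⟨ℓ, g, hℓ, hg, rfl⟩ := hf.exists_linear_factor
    have hℓ0 := left_ne_zero_of_mul hf0
    obtain ⟨p, hpI, d, hdb, hp, hℓp⟩ := hcop ℓ hℓ hℓ0
    have hpL := le_finrank_degreePart_of_mem hpI (fun h => hℓp (h ▸ dvd_zero ℓ)) hp L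
    rcases L with _ | L
    · omega
    by_cases hbL : b ≤ L + 1
    · have hstep :=
        finrank_degreePart_sup_span_singleton_lt (L := L) hℓ hℓ0 hfI hpI hp (by omega) hℓp
      have hih := ih (Ideal.mem_sup_right (Ideal.mem_span_singleton_self g))
        (right_ne_zero_of_mul hf0) hg (fun ℓ' h1 h2 => (hcop ℓ' h1 h2).imp
          fun p' ⟨hp'I, hp'⟩ => ⟨Ideal.mem_sup_left hp'I, hp'⟩) L
      omega
    · omega

theorem finrank_degreePart_span_range_le_of_dvd {ι : Type*} {q : ι → MvPolynomial (Fin 2) K}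
    {i₀ : ι} {a e l : ℕ} (hq0 : q i₀ ≠ 0) (hq : (q i₀).IsHomogeneous a) (hal : a ≤ l)
    {D : MvPolynomial (Fin 2) K} (hD : D.IsHomogeneous e) (hdvd : ∀ i, D ∣ q i) :
    Module.finrank K (degreePart (Ideal.span (Set.range q)) l) ≤ l - e + 1 := by
  obtain ⟨c, hc⟩ := hdvd i₀
  have hea := ((hc ▸ hq).of_mul_left hD (hc ▸ hq0)).1
  rw [← finrank_degreePart_span_singleton hD (left_ne_zero_of_mul (hc ▸ hq0)) (hea.trans hal)]
  exact Submodule.finrank_mono (degreePart_mono (Ideal.span_le.2 (Set.range_subset_iff.2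
    fun i => Ideal.mem_span_singleton.2 (hdvd i))) l)

theorem le_finrank_degreePart_span_range [IsAlgClosed K] {ι : Type*} {n : ι → ℕ}
    {q : ι → MvPolynomial (Fin 2) K} (hq0 : ∀ i, q i ≠ 0) (hqh : ∀ i, (q i).IsHomogeneous (n i))
    {i₀ : ι} {b m : ℕ} (hb : ∀ i, n i ≤ b) (hm : m ≤ n i₀)
    (hno : ¬∃ (D : MvPolynomial (Fin 2) K) (e : ℕ), m ≤ e ∧ D.IsHomogeneous e ∧ ∀ i, D ∣ q i) :
    n i₀ + b - 2 * m + 2 ≤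
      Module.finrank K (degreePart (Ideal.span (Set.range q)) (b + n i₀ - m)) := by
  obtain ⟨G, d, hdm, hG, hGq, hGmax⟩ := exists_common_divisor_of_maximal_degree q hno
  choose p hp using hGq
  have hph i : d ≤ n i ∧ (p i).IsHomogeneous (n i - d) :=
    (hp i ▸ hqh i).of_mul_left hG (hp i ▸ hq0 i)
  have hspan : Ideal.span (Set.range q) = Ideal.span {G} * Ideal.span (Set.range p) := by
    rw [Ideal.span_mul_span', Set.singleton_mul, ← Set.range_comp]
    exact congrArg _ (congrArg _ (_root_.funext hp))
  have hcop (ℓ : MvPolynomial (Fin 2) K) (hℓ : ℓ.IsHomogeneous 1) (_ : ℓ ≠ 0) :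
      ∃ p' ∈ Ideal.span (Set.range p), ∃ d' ≤ b - d, p'.IsHomogeneous d' ∧ ¬ℓ ∣ p' := by
    by_contra! hdvd
    exact hGmax ℓ hℓ fun i => hp i ▸ mul_dvd_mul_left G (hdvd _
      (Ideal.subset_span (Set.mem_range_self i)) _ (Nat.sub_le_sub_right (hb i) d) (hph i).2)
  have hJ := succ_le_finrank_degreePart_add (Ideal.subset_span (Set.mem_range_self i₀))
    (right_ne_zero_of_mul (hp i₀ ▸ hq0 i₀)) (hph i₀).2 hcop (b + n i₀ - m - d)
  have := hb i₀
  rw [hspan, finrank_degreePart_span_singleton_mul hG (left_ne_zero_of_mul (hp i₀ ▸ hq0 i₀))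
    (by omega)]
  omega

end BinaryForm

end MvPolynomial

open MvPolynomial

section ResultantMatrix

variable {ι : Type} {n : ι → ℕ} {q : ι → MvPolynomial (Fin 2) ℂ}

noncomputable def shiftedForm (n : ι → ℕ) (q : ι → MvPolynomial (Fin 2) ℂ) (l : ℕ)
    (r : (i : ι) × Fin (l + 1 - n i)) : MvPolynomial (Fin 2) ℂ :=
  X 0 ^ (l - n r.1 - r.2) * X 1 ^ (r.2 : ℕ) * q r.1

theorem isHomogeneous_shiftedForm (hqh : ∀ i, (q i).IsHomogeneous (n i)) (l : ℕ)
    (r : (i : ι) × Fin (l + 1 - n i)) : (shiftedForm n q l r).IsHomogeneous l := by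
  have := r.2.isLt
  rw [shiftedForm]
  convert ((isHomogeneous_X_pow 0 _).mul (isHomogeneous_X_pow 1 _)).mul (hqh r.1) using 1
  omega

variable [Fintype ι]

theorem resMat_apply (l : ℕ) (r : (i : ι) × Fin (l + 1 - n i)) (c : Fin (l + 1)) :
    resMat n q l r c = coeffOf (shiftedForm n q l r) (l - c) c := by
  obtain ⟨i, t, ht⟩ := r
  have hc := c.isLt
  simp only [resMat, shiftedForm, coeffOf]
  rw [X_pow_eq_monomial, X_pow_eq_monomial, monomial_mul, one_mul, coeff_monomial_mul']
  simp only [single_add_single_le_iff, single_add_single_tsub, one_mul]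
  by_cases h : t ≤ c ∧ c - t ≤ n i
  · rw [if_pos h, if_pos (by omega)]
    congr 3; omega
  · rw [if_neg h, if_neg (by omega)]

theorem linearCombination_resMat_row (hqh : ∀ i, (q i).IsHomogeneous (n i)) (l : ℕ)
    (r : (i : ι) × Fin (l + 1 - n i)) :
    Fintype.linearCombination ℂ (binaryMonomial l) (resMat n q l r) = shiftedForm n q l r := by
  rw [Fintype.linearCombination_apply]
  simp_rw [resMat_apply]
  exact (isHomogeneous_shiftedForm hqh l r).sum_coeff_smul_binaryMonomial

theorem rank_resMat (hqh : ∀ i, (q i).IsHomogeneous (n i)) (l : ℕ) :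
    (resMat n q l).rank =
      Module.finrank ℂ (Submodule.span ℂ (Set.range (shiftedForm n q l))) := by
  rw [Matrix.rank_eq_finrank_span_row, (Submodule.equivMapOfInjective _
    (linearIndependent_binaryMonomial l).fintypeLinearCombination_injective _).finrank_eq,
    Submodule.map_span, ← Set.range_comp, show ⇑(Fintype.linearCombination ℂ (binaryMonomial l)) ∘ (resMat n q l).row =
    shiftedForm n q l from funext (linearCombination_resMat_row hqh l)]

theorem span_range_shiftedForm (hqh : ∀ i, (q i).IsHomogeneous (n i)) {l : ℕ}
    (hnl : ∀ i, n i ≤ l) :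
    Submodule.span ℂ (Set.range (shiftedForm n q l)) =
      degreePart (Ideal.span (Set.range q)) l := by
  refine le_antisymm (Submodule.span_le.2 ?_) fun x ⟨hxI, hx⟩ => ?_
  · rintro _ ⟨r, rfl⟩
    exact ⟨Ideal.mul_mem_left _ _ (Ideal.subset_span ⟨r.1, rfl⟩),
      isHomogeneous_shiftedForm hqh l r⟩
  obtain ⟨a, rfl⟩ := Ideal.mem_span_range_iff_exists_fun.1 hxI
  rw [← homogeneousComponent_eq_self hx, map_sum]
  refine Submodule.sum_mem _ fun i _ => ?_
  have hcomp := homogeneousComponent_mul_of_isHomogeneous_left (hqh i) (a i) (l - n i)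
  rw [Nat.add_sub_cancel' (hnl i)] at hcomp
  rw [mul_comm, hcomp,
    ← (homogeneousComponent_isHomogeneous _ _).sum_coeff_smul_binaryMonomial, Finset.mul_sum]
  refine Submodule.sum_mem _ fun c _ => ?_
  rw [mul_smul_comm]
  have hc : (c : ℕ) < l + 1 - n i := by have := c.isLt; have := hnl i; omega
  refine Submodule.smul_mem _ _ (Submodule.subset_span ⟨⟨i, c, hc⟩, ?_⟩)
  rw [shiftedForm, binaryMonomial, X_pow_eq_monomial, X_pow_eq_monomial, monomial_mul, one_mul,
    mul_comm, Nat.sub_right_comm]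

end ResultantMatrix

theorem stmt_7_general (s : ℕ) (n : Fin s → ℕ)
    (q : Fin s → MvPolynomial (Fin 2) ℂ) (hq0 : ∀ i, q i ≠ 0)
    (hqh : ∀ i, (q i).IsHomogeneous (n i))
    (nmin nmax m : ℕ)
    (hmin2 : ∃ i, n i = nmin)
    (hmax1 : ∀ i, n i ≤ nmax)
    (hm2 : m ≤ nmin) :
    (∃ (D : MvPolynomial (Fin 2) ℂ) (e : ℕ), m ≤ e ∧ D.IsHomogeneous e ∧ ∀ i, D ∣ q i) ↔
    Matrix.rank (resMat n q (nmax + nmin - m)) < nmin + nmax - 2 * m + 2 := by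
  obtain ⟨imin, rfl⟩ := hmin2
  have hnl : ∀ i, n i ≤ nmax + n imin - m := fun i => by have := hmax1 i; omega
  rw [rank_resMat hqh, span_range_shiftedForm hqh hnl]
  constructor
  · rintro ⟨D, e, hme, hD, hdvd⟩
    have := finrank_degreePart_span_range_le_of_dvd (hq0 imin) (hqh imin) (hnl imin) hD hdvd
    omega
  · intro hrank
    by_contra hno
    have := le_finrank_degreePart_span_range hq0 hqh hmax1 hm2 hno
    omega

theorem stmt_7 (s : ℕ) (hs : 1 ≤ s) (n : Fin s → ℕ) (hn : ∀ i, 1 ≤ n i)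
    (q : Fin s → MvPolynomial (Fin 2) ℂ) (hq0 : ∀ i, q i ≠ 0)
    (hqh : ∀ i, (q i).IsHomogeneous (n i))
    (nmin nmax m : ℕ)
    (hmin1 : ∀ i, nmin ≤ n i) (hmin2 : ∃ i, n i = nmin)
    (hmax1 : ∀ i, n i ≤ nmax) (hmax2 : ∃ i, n i = nmax)
    (hm1 : 1 ≤ m) (hm2 : m ≤ nmin) :
    (∃ (D : MvPolynomial (Fin 2) ℂ) (e : ℕ), m ≤ e ∧ D.IsHomogeneous e ∧ ∀ i, D ∣ q i) ↔
    Matrix.rank (resMat n q (nmax + nmin - m)) < nmin + nmax - 2 * m + 2 :=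
  stmt_7_general s n q hq0 hqh nmin nmax m hmin2 hmax1 hm2
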